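/- Let A ∈ 𝒫_π be a canonical plane matrix of type π, acting on the column space ℂ^n with standard basis e_1,...,e_n, and for each i ∈ {1,...,m_1} let V_i = ℂ[A]·e_i be the A-cyclic subspace generated by e_i (the span of e_i, Ae_i, A²e_i, ...). Then ℂ^n is the internal direct sum ℂ^n = V_1 ⊕ V_2 ⊕ ... ⊕ V_{m_1}. -/
import Mathlib


/- Common setup: canonical plane matrices (P. Daugulis, "A parametrization of
matrix conjugacy orbit sets as unions of affine planes"). -/

open Matrix Polynomial

noncomputable section

/-- `ℕ`-indexed entries of the generalized companion matrix `R_l(y₁,...,y_l)`: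
subdiagonal entries `1`, last column given (via Vieta) by the coefficients of
`∏ (X - yᵢ)` (entry in row `k` of the last column is
`(−1)^{l+1−k}·e_{l+1−k}(y)`), all other entries `0`. -/
def genCompE (l : ℕ) (y : Fin l → ℂ) (i j : ℕ) : ℂ :=
  if i < l ∧ j < l then
    (if i = j + 1 then 1
     else if j = l - 1 then -((∏ k, (X - C (y k))).coeff i)
     else 0)
  else 0

/-- The generalized companion matrix `R_l(y₁,...,y_l)`, i.e. the companion
matrix of `∏ (X - yᵢ)`. -/
def genComp (l : ℕ) (y : Fin l → ℂ) : Matrix (Fin l) (Fin l) ℂ :=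
  Matrix.of fun i j => genCompE l y i j

/-- A partition of `n`, recorded by its stacks: `t` stacks, with strictly
decreasing positive distinct values `m 0 > m 1 > ... > m (t-1)` and positive
lengths `l j`, so that the partition consists of `l j` copies of `m j` and
`n = ∑ j, l j * m j`. -/
structure StackPartition (n : ℕ) where
  t : ℕ
  m : Fin t → ℕ
  l : Fin t → ℕ
  m_pos : ∀ j, 0 < m j
  l_pos : ∀ j, 0 < l j
  m_strictAnti : ∀ i j : Fin t, i < j → m j < m i
  sum_eq : (∑ j, l j * m j) = n

namespace StackPartition

variable {n : ℕ} (P : StackPartition n)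

/-- `m j` extended by `0` beyond the number of stacks (`0`-indexed), so
`mE 0 = m_1` and `mE t = m_{t+1} = 0` in the paper's notation. -/
def mE (j : ℕ) : ℕ := if h : j < P.t then P.m ⟨j, h⟩ else 0

/-- Row/column offset of the `j`-th diagonal block (`0`-indexed):
`S j = ∑_{i<j} l i * m i`. -/
def S (j : ℕ) : ℕ := ∑ i : Fin P.t, if (i : ℕ) < j then P.l i * P.m i else 0

/-- `sE j = ∑_{i<j} l i`; the paper's `s_j` (for `1`-indexed `j`) is `sE j`. -/
def sE (j : ℕ) : ℕ := ∑ i : Fin P.t, if (i : ℕ) < j then P.l i else 0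

/-- The multiset of addends of the partition. -/
def parts : Multiset ℕ := ∑ j : Fin P.t, Multiset.replicate (P.l j) (P.m j)

/-- Offsets for the direct sum `⊕_j (m_j - m_{j+1}) G_j`. -/
def T (k : ℕ) : ℕ :=
  ∑ i : Fin P.t, if (i : ℕ) < k then (P.m i - P.mE ((i : ℕ) + 1)) * P.sE ((i : ℕ) + 1) else 0

end StackPartition

/-- Parameters `λ_{j,1},...,λ_{j,l_j}` for each stack `j`. -/
def Params {n : ℕ} (P : StackPartition n) := (j : Fin P.t) → Fin (P.l j) → ℂ

/-- `ℕ`-indexed entry of the canonical plane matrix of type `P` with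
parameters `lam`: the `j`-th diagonal block (of size `l j * m j`, occupying
rows and columns `[S j, S (j+1))`) is `R_{l j}(lam j) ⊗ E_{m j}` (row index
`a` of the block encodes the pair `(a / m j, a % m j)`), the block directly
below it occupies the first `m (j+1)` rows of block `j+1` and the last `m j`
columns of block `j` and equals `[O | E_{m (j+1)}]`, and all other entries
vanish. -/
def cpmEntry {n : ℕ} (P : StackPartition n) (lam : Params P) (r c : ℕ) : ℂ :=
  (∑ j : Fin P.t,
    if P.S j ≤ r ∧ r < P.S ((j : ℕ) + 1) ∧ P.S j ≤ c ∧ c < P.S ((j : ℕ) + 1)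
        ∧ (r - P.S j) % P.m j = (c - P.S j) % P.m j then
      genCompE (P.l j) (lam j) ((r - P.S j) / P.m j) ((c - P.S j) / P.m j)
    else 0)
  +
  (∑ j : Fin P.t,
    if P.S ((j : ℕ) + 1) ≤ r ∧ r < P.S ((j : ℕ) + 1) + P.mE ((j : ℕ) + 1)
        ∧ P.S ((j : ℕ) + 1) - P.m j ≤ c ∧ c < P.S ((j : ℕ) + 1)
        ∧ c - (P.S ((j : ℕ) + 1) - P.m j)
            = (P.m j - P.mE ((j : ℕ) + 1)) + (r - P.S ((j : ℕ) + 1)) then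
      (1 : ℂ)
    else 0)

/-- The canonical plane matrix of type `P` with parameters `lam`. -/
def cpm {n : ℕ} (P : StackPartition n) (lam : Params P) : Matrix (Fin n) (Fin n) ℂ :=
  Matrix.of fun r c => cpmEntry P lam r c

/-- The set `𝒫_π` of canonical plane matrices of type `P`. -/
def planeSet {n : ℕ} (P : StackPartition n) : Set (Matrix (Fin n) (Fin n) ℂ) :=
  { A | ∃ lam : Params P, A = cpm P lam }

/-- Similarity (conjugacy) of square complex matrices. -/
def MatrixSimilar {n : ℕ} (A B : Matrix (Fin n) (Fin n) ℂ) : Prop :=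
  ∃ Q : Matrix (Fin n) (Fin n) ℂ, IsUnit Q.det ∧ A * Q = Q * B

/-- The `A`-cyclic subspace `ℂ[A]·v`, spanned by `v, Av, A²v, ...`. -/
def cyclicSpan {n : ℕ} (A : Matrix (Fin n) (Fin n) ℂ) (v : Fin n → ℂ) :
    Submodule ℂ (Fin n → ℂ) :=
  Submodule.span ℂ (Set.range fun k : ℕ => (A ^ k) *ᵥ v)

/-- `ℕ`-indexed entry of the matrix
`G_j = ⊕_{i≤j} C(a_{i,0},...,a_{i,l_i−1}) + Σ_{i<j} E_{s_i+1,s_i}`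
(`0`-indexed `j`; the `i`-th diagonal block is the companion matrix of
`∏_k (X - λ_{i,k})`, and the matrix units sit just below the lower-left
corners of the diagonal blocks). -/
def GEntry {n : ℕ} (P : StackPartition n) (lam : Params P) (j r c : ℕ) : ℂ :=
  (∑ i : Fin P.t,
    if (i : ℕ) ≤ j ∧ P.sE i ≤ r ∧ r < P.sE ((i : ℕ) + 1)
        ∧ P.sE i ≤ c ∧ c < P.sE ((i : ℕ) + 1) then
      genCompE (P.l i) (lam i) (r - P.sE i) (c - P.sE i)
    else 0)
  +
  (∑ i : Fin P.t,
    if 1 ≤ (i : ℕ) ∧ (i : ℕ) ≤ j ∧ r = P.sE i ∧ c + 1 = P.sE i then (1 : ℂ) else 0)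

/-- The `s_j × s_j` matrix `G_j` (`0`-indexed `j`, of size `sE (j+1)`). -/
def Gm {n : ℕ} (P : StackPartition n) (lam : Params P) (j : Fin P.t) :
    Matrix (Fin (P.sE ((j : ℕ) + 1))) (Fin (P.sE ((j : ℕ) + 1))) ℂ :=
  Matrix.of fun r c => GEntry P lam j r c

/-- The multiset `[λ_{j,1},...,λ_{j,l_j}]` of stack `j`. -/
def stackMultiset {n : ℕ} (P : StackPartition n) (lam : Params P) (j : Fin P.t) :
    Multiset ℂ :=
  Multiset.map (lam j) Finset.univ.val

/-- `μ(z, j)`: multiplicity of `z` in the multiset `[λ_{j,1},...,λ_{j,l_j}]`. -/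
def mu {n : ℕ} (P : StackPartition n) (lam : Params P) (z : ℂ) (j : Fin P.t) : ℕ :=
  (stackMultiset P lam j).count z

/-- The multiset of all parameters of stacks `0,...,j` (`0`-indexed), so
`α(z, j) = (lamUpTo P lam j).count z`. -/
def lamUpTo {n : ℕ} (P : StackPartition n) (lam : Params P) (j : ℕ) : Multiset ℂ :=
  ∑ i : Fin P.t, if (i : ℕ) ≤ j then stackMultiset P lam i else 0

/-- Index type for the direct sum of one Jordan block per distinct element of a
multiset `s`, the block for `z` having size `s.count z`. -/
abbrev JordanIdx (s : Multiset ℂ) : Type := Σ z : s.toFinset, Fin (s.count z.val)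

/-- The direct sum `⊕_z J_{s.count z}(z)` over the distinct elements `z` of the
multiset `s` (lower Jordan blocks: eigenvalue on the diagonal, ones on the
subdiagonal). -/
def jordanOfMultiset (s : Multiset ℂ) : Matrix (JordanIdx s) (JordanIdx s) ℂ :=
  Matrix.of fun x y =>
    if x.1 = y.1 then
      (if (x.2 : ℕ) = (y.2 : ℕ) then x.1.val
       else if (x.2 : ℕ) = (y.2 : ℕ) + 1 then 1 else 0)
    else 0

/-- `0`-indexed Weyr characteristic: `weyr B z i = ω_{i+1}` where
`ω_k = dim ker (B - zI)^k − dim ker (B - zI)^{k-1}`. -/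
def weyr {n : ℕ} (B : Matrix (Fin n) (Fin n) ℂ) (z : ℂ) (i : ℕ) : ℕ :=
  Module.finrank ℂ (LinearMap.ker ((B - z • 1).mulVecLin ^ (i + 1)))
    - Module.finrank ℂ (LinearMap.ker ((B - z • 1).mulVecLin ^ i))

/-- `ℕ`-indexed entry of the block diagonal matrix `⊕_j (m_j - m_{j+1}) G_j`
(for each `j`, exactly `m j - m (j+1)` consecutive copies of `G_j`). -/
def dsEntry {n : ℕ} (P : StackPartition n) (lam : Params P) (r c : ℕ) : ℂ :=
  ∑ j : Fin P.t,
    if P.T j ≤ r ∧ r < P.T ((j : ℕ) + 1) ∧ P.T j ≤ c ∧ c < P.T ((j : ℕ) + 1)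
        ∧ (r - P.T j) / P.sE ((j : ℕ) + 1) = (c - P.T j) / P.sE ((j : ℕ) + 1) then
      GEntry P lam j ((r - P.T j) % P.sE ((j : ℕ) + 1)) ((c - P.T j) % P.sE ((j : ℕ) + 1))
    else 0

/-- Index type for `⊕_{j=1}^{t} (m_j - m_{j+1}) (⊕_z J_{α(z,j)}(z))`. -/
abbrev FullJordanIdx {n : ℕ} (P : StackPartition n) (lam : Params P) : Type :=
  Σ j : Fin P.t, Fin (P.m j - P.mE ((j : ℕ) + 1)) × JordanIdx (lamUpTo P lam (j : ℕ))

/-- The matrix `⊕_{j=1}^{t} (m_j - m_{j+1}) (⊕_z J_{α(z,j)}(z))`: for each `j`,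
`m j - m (j+1)` copies of the direct sum, over the distinct `z` with
`α(z,j) = μ(z,1) + ... + μ(z,j) > 0`, of the Jordan blocks `J_{α(z,j)}(z)`. -/
def fullJordan {n : ℕ} (P : StackPartition n) (lam : Params P) :
    Matrix (FullJordanIdx P lam) (FullJordanIdx P lam) ℂ :=
  Matrix.of fun x y =>
    if h : x.1 = y.1 then
      (fun y2 : Fin (P.m x.1 - P.mE ((x.1 : ℕ) + 1)) × JordanIdx (lamUpTo P lam (x.1 : ℕ)) =>
        if x.2.1 = y2.1 then jordanOfMultiset (lamUpTo P lam (x.1 : ℕ)) x.2.2 y2.2 else 0)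
      (cast (congrArg (fun j : Fin P.t =>
        Fin (P.m j - P.mE ((j : ℕ) + 1)) × JordanIdx (lamUpTo P lam (j : ℕ))) h.symm) y.2)
    else 0

end
noncomputable section MyAux
section Aux
namespace StackPartition
variable {n : ℕ} (P : StackPartition n)

/-- Stack length extended by 0. -/
def lE (j : ℕ) : ℕ := if h : j < P.t then P.l ⟨j, h⟩ else 0

lemma mE_pos {j : ℕ} (h : j < P.t) : 0 < P.mE j := by
  simp only [mE, dif_pos h]; exact P.m_pos _

lemma lE_pos {j : ℕ} (h : j < P.t) : 0 < P.lE j := by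
  simp only [lE, dif_pos h]; exact P.l_pos _

lemma mE_anti {j k : ℕ} (h : j ≤ k) : P.mE k ≤ P.mE j := by
  unfold mE
  split_ifs with hk hj hj
  · rcases eq_or_lt_of_le h with h' | h'
    · subst h'; simp
    · exact le_of_lt (P.m_strictAnti ⟨j, hj⟩ ⟨k, hk⟩ h')
  · exact absurd (lt_of_le_of_lt h hk) hj
  all_goals simp

lemma S_zero : P.S 0 = 0 := by
  unfold S; simp

lemma S_t : P.S P.t = n := by
  unfold S
  exact (Finset.sum_congr rfl (fun i _ => by simp [i.isLt])).trans P.sum_eq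

lemma S_mono {j k : ℕ} (h : j ≤ k) : P.S j ≤ P.S k := by
  unfold S; exact Finset.sum_le_sum fun i _ => by split_ifs with h1 h2 h2 <;> omega

lemma S_succ {j : ℕ} (h : j < P.t) : P.S (j + 1) = P.S j + P.lE j * P.mE j := by
  unfold S lE mE
  rw [dif_pos h, dif_pos h]
  have : ∀ i : Fin P.t, (if (i : ℕ) < j + 1 then P.l i * P.m i else 0)
      = (if (i : ℕ) < j then P.l i * P.m i else 0)
        + (if i = ⟨j, h⟩ then P.l i * P.m i else 0) := by
    intro i
    by_cases hij : i = ⟨j, h⟩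
    · subst hij; simp
    · have : (i : ℕ) ≠ j := fun hc => hij (Fin.ext hc)
      split_ifs <;> omega
  rw [Finset.sum_congr rfl (fun i _ => this i), Finset.sum_add_distrib,
    Finset.sum_ite_eq' Finset.univ (⟨j, h⟩ : Fin P.t)]
  simp

lemma S_le_of_lt_t {j : ℕ} (h : j ≤ P.t) : P.S j ≤ n :=
  le_of_le_of_eq (P.S_mono h) P.S_t

lemma t_pos (hn : 0 < n) : 0 < P.t := by
  rcases Nat.eq_zero_or_pos P.t with h | h
  · exfalso
    have h2 := P.sum_eq
    have h3 : (∑ j : Fin P.t, P.l j * P.m j) = 0 :=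
      Finset.sum_eq_zero (fun i _ => (Nat.not_lt_zero (i : ℕ) (by omega)).elim)
    omega
  · exact h

lemma mE0_le_n (hn : 0 < n) : P.mE 0 ≤ n := by
  have ht := P.t_pos hn
  have h1 : P.S 1 ≤ n := P.S_le_of_lt_t ht
  rw [P.S_succ ht, P.S_zero] at h1
  have := P.lE_pos ht
  have := P.mE_pos ht
  nlinarith

/-- The block index of row/column `r`. -/
def blk (r : ℕ) : ℕ := Nat.findGreatest (fun j => P.S j ≤ r) P.t

lemma S_blk_le (r : ℕ) : P.S (P.blk r) ≤ r := by
  exact Nat.findGreatest_spec (P := fun j => P.S j ≤ r) (Nat.zero_le P.t)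
    (show P.S 0 ≤ r by rw [P.S_zero]; exact Nat.zero_le r)

lemma blk_le (r : ℕ) : P.blk r ≤ P.t := Nat.findGreatest_le _

lemma blk_lt {r : ℕ} (hr : r < n) : P.blk r < P.t := by
  rcases eq_or_lt_of_le (P.blk_le r) with h | h
  · exfalso; have := P.S_blk_le r; rw [h, P.S_t] at this; omega
  · exact h

lemma lt_S_blk_succ {r : ℕ} (hr : r < n) : r < P.S (P.blk r + 1) := by
  by_contra hc
  push_neg at hc
  exact Nat.findGreatest_is_greatest (P := fun j => P.S j ≤ r)
    (Nat.lt_succ_self _) (P.blk_lt hr) hc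

lemma blk_eq {r j : ℕ} (hj : j < P.t) (h1 : P.S j ≤ r) (h2 : r < P.S (j + 1)) :
    P.blk r = j := by
  have hr : r < n := lt_of_lt_of_le h2 (P.S_le_of_lt_t hj)
  rcases lt_trichotomy (P.blk r) j with h | h | h
  · exfalso
    have : P.blk r + 1 ≤ j := h
    have := P.S_mono this
    have := P.lt_S_blk_succ hr
    omega
  · exact h
  · exfalso
    have : j + 1 ≤ P.blk r := h
    have := P.S_mono this
    have := P.S_blk_le r
    omega

/-- The canonical index of position `(j, q, s)`. -/
def idx (j q s : ℕ) : ℕ := P.S j + q * P.mE j + s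

lemma idx_lt_S_succ {j q s : ℕ} (hj : j < P.t) (hq : q < P.lE j) (hs : s < P.mE j) :
    P.idx j q s < P.S (j + 1) := by
  rw [P.S_succ hj]
  unfold idx
  have : q * P.mE j + s < P.lE j * P.mE j := by
    calc q * P.mE j + s < q * P.mE j + P.mE j := by omega
    _ = (q + 1) * P.mE j := by ring
    _ ≤ P.lE j * P.mE j := Nat.mul_le_mul_right _ hq
  omega

lemma idx_lt_n {j q s : ℕ} (hj : j < P.t) (hq : q < P.lE j) (hs : s < P.mE j) :
    P.idx j q s < n :=
  lt_of_lt_of_le (P.idx_lt_S_succ hj hq hs) (P.S_le_of_lt_t hj)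

lemma blk_idx {j q s : ℕ} (hj : j < P.t) (hq : q < P.lE j) (hs : s < P.mE j) :
    P.blk (P.idx j q s) = j :=
  P.blk_eq hj (by unfold idx; omega) (P.idx_lt_S_succ hj hq hs)

lemma idx_div {j q s : ℕ} (hj : j < P.t) (hs : s < P.mE j) :
    (P.idx j q s - P.S j) / P.mE j = q := by
  unfold idx
  have h : P.S j + q * P.mE j + s - P.S j = q * P.mE j + s := by omega
  rw [h, Nat.mul_comm, Nat.mul_add_div (P.mE_pos hj), Nat.div_eq_of_lt hs]
  omega

lemma idx_mod {j q s : ℕ} (_hj : j < P.t) (hs : s < P.mE j) :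
    (P.idx j q s - P.S j) % P.mE j = s := by
  unfold idx
  have h : P.S j + q * P.mE j + s - P.S j = q * P.mE j + s := by omega
  rw [h, Nat.mul_comm, Nat.mul_add_mod, Nat.mod_eq_of_lt hs]

/-- Decomposition: every `r < n` equals `idx (blk r) q s` canonically. -/
lemma idx_decomp {r : ℕ} (hr : r < n) :
    P.idx (P.blk r) ((r - P.S (P.blk r)) / P.mE (P.blk r))
      ((r - P.S (P.blk r)) % P.mE (P.blk r)) = r := by
  have hj := P.blk_lt hr
  have hm := P.mE_pos hj
  unfold idx
  have h1 := P.S_blk_le r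
  have h2 := Nat.div_add_mod' (r - P.S (P.blk r)) (P.mE (P.blk r))
  omega

lemma div_lt_lE {r : ℕ} (hr : r < n) :
    (r - P.S (P.blk r)) / P.mE (P.blk r) < P.lE (P.blk r) := by
  have hj := P.blk_lt hr
  have hm := P.mE_pos hj
  have h1 := P.S_blk_le r
  have h2 := P.lt_S_blk_succ hr
  rw [P.S_succ hj] at h2
  apply Nat.div_lt_of_lt_mul
  rw [Nat.mul_comm]
  omega

lemma mod_lt_mE {r : ℕ} (hr : r < n) :
    (r - P.S (P.blk r)) % P.mE (P.blk r) < P.mE (P.blk r) :=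
  Nat.mod_lt _ (P.mE_pos (P.blk_lt hr))

/-- The class of index `r`. -/
def cls (r : ℕ) : ℕ :=
  (r - P.S (P.blk r)) % P.mE (P.blk r) + (P.mE 0 - P.mE (P.blk r))

lemma cls_lt_mE0 {r : ℕ} (hr : r < n) : P.cls r < P.mE 0 := by
  have h1 := P.mod_lt_mE hr
  have h2 := P.mE_anti (Nat.zero_le (P.blk r))
  unfold cls
  omega

lemma cls_idx {j q s : ℕ} (hj : j < P.t) (hq : q < P.lE j) (hs : s < P.mE j) :
    P.cls (P.idx j q s) = s + (P.mE 0 - P.mE j) := by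
  unfold cls
  rw [P.blk_idx hj hq hs, P.idx_mod hj hs]

end StackPartition
end Aux
section Aux2
namespace StackPartition
variable {n : ℕ} (P : StackPartition n)

lemma mE_coe (j : Fin P.t) : P.mE (j : ℕ) = P.m j := by
  unfold mE; rw [dif_pos j.isLt]

lemma lE_coe (j : Fin P.t) : P.lE (j : ℕ) = P.l j := by
  unfold lE; rw [dif_pos j.isLt]

/-- Reconstruction of `r` from its block data. -/
lemma eq_idx_of_mem_block {r : ℕ} (j : Fin P.t) (h1 : P.S j ≤ r) (h2 : r < P.S ((j:ℕ)+1)) :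
    r = P.idx (j:ℕ) ((r - P.S j) / P.m j) ((r - P.S j) % P.m j) := by
  have hr : r < n := lt_of_lt_of_le h2 (P.S_le_of_lt_t j.isLt)
  have hb : P.blk r = (j : ℕ) := P.blk_eq j.isLt h1 h2
  have := P.idx_decomp hr
  rw [hb, P.mE_coe] at this
  exact this.symm

lemma div_lt_l {r : ℕ} (j : Fin P.t) (h1 : P.S j ≤ r) (h2 : r < P.S ((j:ℕ)+1)) :
    (r - P.S j) / P.m j < P.l j := by
  have hr : r < n := lt_of_lt_of_le h2 (P.S_le_of_lt_t j.isLt)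
  have := P.div_lt_lE hr
  rwa [P.blk_eq j.isLt h1 h2, P.mE_coe, P.lE_coe] at this

end StackPartition

namespace CPM
open StackPartition
variable {n : ℕ} (P : StackPartition n) (lam : Params P)

lemma cpmEntry_split {r c : ℕ} (j : Fin P.t) (h1 : P.S j ≤ c) (h2 : c < P.S ((j:ℕ)+1)) :
    cpmEntry P lam r c =
      (if P.S j ≤ r ∧ r < P.S ((j:ℕ)+1)
          ∧ (r - P.S j) % P.m j = (c - P.S j) % P.m j then
        genCompE (P.l j) (lam j) ((r - P.S j) / P.m j) ((c - P.S j) / P.m j)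
      else 0)
      + (if P.S ((j:ℕ)+1) ≤ r ∧ r < P.S ((j:ℕ)+1) + P.mE ((j:ℕ)+1)
          ∧ P.S ((j:ℕ)+1) - P.m j ≤ c
          ∧ c - (P.S ((j:ℕ)+1) - P.m j)
              = (P.m j - P.mE ((j:ℕ)+1)) + (r - P.S ((j:ℕ)+1)) then
          (1 : ℂ)
        else 0) := by
  unfold cpmEntry
  congr 1
  · rw [Finset.sum_eq_single j]
    · exact if_congr (by tauto) rfl rfl
    · intro b _ hb
      rw [if_neg]
      rintro ⟨hb1, hb2, hb3, hb4, -⟩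
      exact hb (Fin.ext ((P.blk_eq b.isLt hb3 hb4).symm.trans (P.blk_eq j.isLt h1 h2)))
    · exact fun h => absurd (Finset.mem_univ j) h
  · rw [Finset.sum_eq_single j]
    · exact if_congr (by tauto) rfl rfl
    · intro b _ hb
      rw [if_neg]
      rintro ⟨hb1, hb2, hb3, hb4, -⟩
      have hS := P.S_succ b.isLt
      rw [P.lE_coe, P.mE_coe] at hS
      have hm : P.m b ≤ P.l b * P.m b := Nat.le_mul_of_pos_left _ (P.l_pos b)
      have hb3' : P.S b ≤ c := by omega
      exact hb (Fin.ext ((P.blk_eq b.isLt hb3' hb4).symm.trans (P.blk_eq j.isLt h1 h2)))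
    · exact fun h => absurd (Finset.mem_univ j) h

/-- E1: subdiagonal columns. -/
lemma cpmEntry_sub (j : Fin P.t) {q s : ℕ} (hq : q + 1 < P.l j) (hs : s < P.m j)
    (r : ℕ) :
    cpmEntry P lam r (P.idx (j:ℕ) q s) =
      if r = P.idx (j:ℕ) (q+1) s then 1 else 0 := by
  have hmc := P.mE_coe j
  have hlc := P.lE_coe j
  have hq' : q < P.lE (j:ℕ) := by omega
  have hs' : s < P.mE (j:ℕ) := by omega
  have hc1 : P.S j ≤ P.idx (j:ℕ) q s := by unfold StackPartition.idx; omega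
  have hc2 : P.idx (j:ℕ) q s < P.S ((j:ℕ)+1) := P.idx_lt_S_succ j.isLt hq' hs'
  rw [cpmEntry_split P lam j hc1 hc2]
  have hmod : (P.idx (j:ℕ) q s - P.S j) % P.m j = s := by
    rw [← hmc]; exact P.idx_mod j.isLt hs'
  have hdiv : (P.idx (j:ℕ) q s - P.S j) / P.m j = q := by
    rw [← hmc]; exact P.idx_div j.isLt hs'
  rw [hmod, hdiv]
  have hidx : P.idx (j:ℕ) q s = P.S j + q * P.m j + s := by
    unfold StackPartition.idx; rw [hmc]
  have hterm2 : ¬(P.S ((j:ℕ)+1) ≤ r ∧ r < P.S ((j:ℕ)+1) + P.mE ((j:ℕ)+1)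
      ∧ P.S ((j:ℕ)+1) - P.m j ≤ P.idx (j:ℕ) q s
      ∧ P.idx (j:ℕ) q s - (P.S ((j:ℕ)+1) - P.m j)
          = (P.m j - P.mE ((j:ℕ)+1)) + (r - P.S ((j:ℕ)+1))) := by
    rintro ⟨a1, a2, a3, a4⟩
    have hS := P.S_succ j.isLt
    rw [hlc, hmc] at hS
    have hmul : (q + 1 + 1) * P.m j ≤ P.l j * P.m j := Nat.mul_le_mul_right _ hq
    have hexp : (q + 1 + 1) * P.m j = q * P.m j + P.m j + P.m j := by ring
    rw [hidx] at a3 a4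
    omega
  rw [if_neg hterm2, add_zero]
  by_cases hr : r = P.idx (j:ℕ) (q+1) s
  · subst hr
    have hq1' : q + 1 < P.lE (j:ℕ) := by omega
    have hc1' : P.S j ≤ P.idx (j:ℕ) (q+1) s := by unfold StackPartition.idx; omega
    have hc2' := P.idx_lt_S_succ j.isLt hq1' hs'
    have hmod' : (P.idx (j:ℕ) (q+1) s - P.S j) % P.m j = s := by
      rw [← hmc]; exact P.idx_mod j.isLt hs'
    have hdiv' : (P.idx (j:ℕ) (q+1) s - P.S j) / P.m j = q + 1 := by
      rw [← hmc]; exact P.idx_div j.isLt hs'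
    rw [if_pos ⟨hc1', hc2', hmod'⟩, hdiv', if_pos rfl]
    unfold genCompE
    rw [if_pos ⟨by omega, by omega⟩, if_pos rfl]
  · rw [if_neg hr]
    by_cases hcond : P.S j ≤ r ∧ r < P.S ((j:ℕ)+1) ∧ (r - P.S j) % P.m j = s
    · rw [if_pos hcond]
      obtain ⟨b1, b2, b3⟩ := hcond
      have hd := P.div_lt_l j b1 b2
      unfold genCompE
      rw [if_pos ⟨hd, by omega⟩]
      have hne : ¬ ((r - P.S j) / P.m j = q + 1) := by
        intro hdq
        apply hr
        have := P.eq_idx_of_mem_block j b1 b2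
        rw [hdq, b3] at this
        exact this
      rw [if_neg hne, if_neg (show ¬ q = P.l j - 1 by omega)]
    · rw [if_neg hcond]

/-- E2: last columns of a block. -/
lemma cpmEntry_last (j : Fin P.t) {s : ℕ} (hs : s < P.m j) (r : ℕ) :
    cpmEntry P lam r (P.idx (j:ℕ) (P.l j - 1) s) =
      (if P.S j ≤ r ∧ r < P.S ((j:ℕ)+1) ∧ (r - P.S j) % P.m j = s then
        -((∏ k, (X - C (lam j k))).coeff ((r - P.S j) / P.m j))
      else 0)
      + (if P.S ((j:ℕ)+1) ≤ r ∧ r < P.S ((j:ℕ)+1) + P.mE ((j:ℕ)+1)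
          ∧ s = (P.m j - P.mE ((j:ℕ)+1)) + (r - P.S ((j:ℕ)+1)) then
          (1 : ℂ)
        else 0) := by
  have hmc := P.mE_coe j -- E2marker
  have hlc := P.lE_coe j
  have hl := P.l_pos j
  have hq' : P.l j - 1 < P.lE (j:ℕ) := by omega
  have hs' : s < P.mE (j:ℕ) := by omega
  have hc1 : P.S j ≤ P.idx (j:ℕ) (P.l j - 1) s := by unfold StackPartition.idx; omega
  have hc2 : P.idx (j:ℕ) (P.l j - 1) s < P.S ((j:ℕ)+1) := P.idx_lt_S_succ j.isLt hq' hs'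
  rw [cpmEntry_split P lam j hc1 hc2]
  have hmod : (P.idx (j:ℕ) (P.l j - 1) s - P.S j) % P.m j = s := by
    rw [← hmc]; exact P.idx_mod j.isLt hs'
  have hdiv : (P.idx (j:ℕ) (P.l j - 1) s - P.S j) / P.m j = P.l j - 1 := by
    rw [← hmc]; exact P.idx_div j.isLt hs'
  rw [hmod, hdiv]
  congr 1
  · by_cases hcond : P.S j ≤ r ∧ r < P.S ((j:ℕ)+1) ∧ (r - P.S j) % P.m j = s
    · rw [if_pos hcond, if_pos hcond]
      obtain ⟨b1, b2, b3⟩ := hcond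
      have hd := P.div_lt_l j b1 b2
      unfold genCompE
      rw [if_pos ⟨hd, by omega⟩, if_neg (by omega), if_pos rfl]
    · rw [if_neg hcond, if_neg hcond]
  · apply if_congr _ rfl rfl
    have hS := P.S_succ j.isLt
    rw [hlc, hmc] at hS
    have hexp : P.l j * P.m j = (P.l j - 1) * P.m j + P.m j := by
      conv_lhs => rw [show P.l j = (P.l j - 1) + 1 by omega]
      rw [Nat.succ_mul]
    have hidx : P.idx (j:ℕ) (P.l j - 1) s = P.S j + (P.l j - 1) * P.m j + s := by
      unfold StackPartition.idx; rw [hmc]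
    have hkey : P.idx (j:ℕ) (P.l j - 1) s - (P.S ((j:ℕ)+1) - P.m j) = s := by
      omega
    have hge : P.S ((j:ℕ)+1) - P.m j ≤ P.idx (j:ℕ) (P.l j - 1) s := by omega
    rw [hkey]
    tauto

end CPM
end Aux2
section Aux3
namespace CPM
open StackPartition
variable {n : ℕ} (P : StackPartition n) (lam : Params P)

lemma mE_succ_le (j : Fin P.t) : P.mE ((j:ℕ)+1) ≤ P.m j := by
  have := P.mE_anti (Nat.le_succ (j:ℕ))
  rwa [P.mE_coe] at this

/-- Class preservation: nonzero entries connect indices of the same class. -/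
lemma cls_preserve {r c : ℕ} (hr : r < n) (hc : c < n)
    (h : cpmEntry P lam r c ≠ 0) : P.cls r = P.cls c := by
  set j : Fin P.t := ⟨P.blk c, P.blk_lt hc⟩ with hjdef
  have hb : P.blk c = (j:ℕ) := rfl
  set q := (c - P.S (j:ℕ)) / P.mE (j:ℕ) with hqdef
  set s := (c - P.S (j:ℕ)) % P.mE (j:ℕ) with hsdef
  have hq : q < P.lE (j:ℕ) := P.div_lt_lE hc
  have hs : s < P.mE (j:ℕ) := P.mod_lt_mE hc
  have hcidx : c = P.idx (j:ℕ) q s := (P.idx_decomp hc).symm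
  have hclsc : P.cls c = s + (P.mE 0 - P.mE (j:ℕ)) := by
    rw [hcidx]; exact P.cls_idx j.isLt hq hs
  have hlc := P.lE_coe j
  have hmc := P.mE_coe j
  by_cases hql : q + 1 < P.l j
  · rw [hcidx, cpmEntry_sub P lam j hql (by omega) r] at h
    have hreq : r = P.idx (j:ℕ) (q+1) s := by
      by_contra hne; rw [if_neg hne] at h; exact h rfl
    rw [hreq, P.cls_idx j.isLt (by omega) hs, hclsc]
  · have hqeq : q = P.l j - 1 := by have := P.l_pos j; omega
    rw [hcidx, hqeq, cpmEntry_last P lam j (by omega) r] at h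
    have hcases : (P.S j ≤ r ∧ r < P.S ((j:ℕ)+1) ∧ (r - P.S j) % P.m j = s)
        ∨ (P.S ((j:ℕ)+1) ≤ r ∧ r < P.S ((j:ℕ)+1) + P.mE ((j:ℕ)+1)
            ∧ s = (P.m j - P.mE ((j:ℕ)+1)) + (r - P.S ((j:ℕ)+1))) := by
      by_contra hcon
      rw [if_neg (fun ha => hcon (Or.inl ha)), if_neg (fun hb => hcon (Or.inr hb)),
        add_zero] at h
      exact h rfl
    rcases hcases with h1 | h2
    · obtain ⟨b1, b2, b3⟩ := h1
      have hbr : P.blk r = (j:ℕ) := P.blk_eq j.isLt b1 b2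
      have hclsr : P.cls r = (r - P.S (j:ℕ)) % P.mE (j:ℕ) + (P.mE 0 - P.mE (j:ℕ)) := by
        unfold StackPartition.cls
        rw [hbr]
      rw [hclsr, hclsc, hmc, b3]
    · obtain ⟨b1, b2, b3⟩ := h2
      have hj1 : (j:ℕ)+1 < P.t := by
        by_contra hcon
        have : P.mE ((j:ℕ)+1) = 0 := by unfold StackPartition.mE; rw [dif_neg hcon]
        omega
      have hmpos := P.mE_pos hj1
      have hS2 := P.S_succ hj1
      have hmle : P.mE ((j:ℕ)+1) ≤ P.lE ((j:ℕ)+1) * P.mE ((j:ℕ)+1) :=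
        Nat.le_mul_of_pos_left _ (P.lE_pos hj1)
      have hbr : P.blk r = (j:ℕ)+1 := P.blk_eq hj1 b1 (by omega)
      have hclsr : P.cls r
          = (r - P.S ((j:ℕ)+1)) % P.mE ((j:ℕ)+1) + (P.mE 0 - P.mE ((j:ℕ)+1)) := by
        unfold StackPartition.cls
        rw [hbr]
      have hmod : (r - P.S ((j:ℕ)+1)) % P.mE ((j:ℕ)+1) = r - P.S ((j:ℕ)+1) :=
        Nat.mod_eq_of_lt (by omega)
      rw [hclsr, hclsc, hmod]
      have h1 := mE_succ_le P j
      have h2 : P.mE (j:ℕ) ≤ P.mE 0 := P.mE_anti (Nat.zero_le _)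
      omega

/-- E1 as a vector identity. -/
lemma mulVec_single_sub (j : Fin P.t) {q s : ℕ} (hq : q + 1 < P.l j) (hs : s < P.m j)
    (c c' : Fin n) (hcv : (c:ℕ) = P.idx (j:ℕ) q s) (hcv' : (c':ℕ) = P.idx (j:ℕ) (q+1) s) :
    cpm P lam *ᵥ Pi.single c (1:ℂ) = Pi.single c' (1:ℂ) := by
  funext r
  rw [Matrix.mulVec_single]
  show cpmEntry P lam (r:ℕ) (c:ℕ) * 1 = _
  rw [mul_one, hcv, cpmEntry_sub P lam j hq hs, Pi.single_apply]
  by_cases hr : r = c'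
  · rw [if_pos hr, if_pos (by rw [hr, hcv'])]
  · rw [if_neg hr, if_neg (fun hh => hr (Fin.ext (hh.trans hcv'.symm)))]

/-- E2 as a vector identity (block-descent case). -/
lemma mulVec_single_last (j : Fin P.t) (hj1 : (j:ℕ)+1 < P.t) {s' : ℕ}
    (hs' : s' < P.mE ((j:ℕ)+1))
    (c c' : Fin n) (hcv : (c:ℕ) = P.idx (j:ℕ) (P.l j - 1) (s' + (P.m j - P.mE ((j:ℕ)+1))))
    (hcv' : (c':ℕ) = P.idx ((j:ℕ)+1) 0 s') (w : Fin (P.l j) → Fin n)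
    (hw : ∀ q' : Fin (P.l j), ((w q' : ℕ) = P.idx (j:ℕ) (q':ℕ) (s' + (P.m j - P.mE ((j:ℕ)+1))))) :
    cpm P lam *ᵥ Pi.single c (1:ℂ) =
      (∑ q' : Fin (P.l j),
        (-((∏ k, (X - C (lam j k))).coeff (q':ℕ))) • Pi.single (w q') (1:ℂ))
      + Pi.single c' (1:ℂ) := by
  have hmsle := mE_succ_le P j
  have hmpos := P.mE_pos hj1
  set s : ℕ := s' + (P.m j - P.mE ((j:ℕ)+1)) with hsdef
  have hs : s < P.m j := by omega
  funext r
  rw [Matrix.mulVec_single]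
  show cpmEntry P lam (r:ℕ) (c:ℕ) * 1 = _
  rw [mul_one, hcv, cpmEntry_last P lam j hs]
  rw [Pi.add_apply, Finset.sum_apply]
  congr 1
  · by_cases hcond : P.S j ≤ (r:ℕ) ∧ (r:ℕ) < P.S ((j:ℕ)+1) ∧ ((r:ℕ) - P.S j) % P.m j = s
    · rw [if_pos hcond]
      obtain ⟨b1, b2, b3⟩ := hcond
      have hd := P.div_lt_l j b1 b2
      have hrec := P.eq_idx_of_mem_block j b1 b2
      rw [b3] at hrec
      rw [Finset.sum_eq_single (⟨((r:ℕ) - P.S j) / P.m j, hd⟩ : Fin (P.l j))]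
      · rw [Pi.smul_apply, Pi.single_apply, if_pos, smul_eq_mul, mul_one]
        exact Fin.ext ((hw _).trans (by rw [← hrec])).symm
      · intro b _ hb
        rw [Pi.smul_apply, Pi.single_apply, if_neg, smul_zero]
        intro hre
        apply hb
        apply Fin.ext
        show (b:ℕ) = ((r:ℕ) - P.S j) / P.m j
        have : (r:ℕ) = P.idx (j:ℕ) (b:ℕ) s := by rw [hre, hw b]
        have h2 : ((r:ℕ) - P.S j) / P.m j = (b:ℕ) := by
          rw [this, ← P.mE_coe j]
          exact P.idx_div j.isLt (by rw [P.mE_coe]; exact hs)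
        omega
      · exact fun hmem => absurd (Finset.mem_univ _) hmem
    · rw [if_neg hcond]
      symm
      apply Finset.sum_eq_zero
      intro b _
      rw [Pi.smul_apply, Pi.single_apply, if_neg, smul_zero]
      intro hre
      apply hcond
      have hval : (r:ℕ) = P.idx (j:ℕ) (b:ℕ) s := by rw [hre, hw b]
      have hbl : (b:ℕ) < P.lE (j:ℕ) := by rw [P.lE_coe]; exact b.isLt
      have hsE : s < P.mE (j:ℕ) := by rw [P.mE_coe]; exact hs
      refine ⟨by rw [hval]; unfold StackPartition.idx; omega,
        by rw [hval]; exact P.idx_lt_S_succ j.isLt hbl hsE, ?_⟩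
      rw [hval, ← P.mE_coe j]
      exact P.idx_mod j.isLt hsE
  · rw [Pi.single_apply]
    have hc'v : (c':ℕ) = P.S ((j:ℕ)+1) + s' := by
      rw [hcv']; unfold StackPartition.idx; omega
    by_cases hr : r = c'
    · rw [if_pos hr, if_pos]
      subst hr
      refine ⟨by omega, by omega, by omega⟩
    · rw [if_neg hr, if_neg]
      rintro ⟨b1, b2, b3⟩
      exact hr (Fin.ext (show (r:ℕ) = (c':ℕ) by omega))

end CPM
end Aux3
section Aux4
namespace CPM
open StackPartition

lemma mem_cyclicSpan_self {n : ℕ} (A : Matrix (Fin n) (Fin n) ℂ) (v : Fin n → ℂ) :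
    v ∈ cyclicSpan A v :=
  Submodule.subset_span ⟨0, by simp⟩

lemma mulVec_mem_cyclicSpan {n : ℕ} (A : Matrix (Fin n) (Fin n) ℂ) (v : Fin n → ℂ)
    {x : Fin n → ℂ} (hx : x ∈ cyclicSpan A v) : A *ᵥ x ∈ cyclicSpan A v := by
  have hle : cyclicSpan A v ≤ Submodule.comap A.mulVecLin (cyclicSpan A v) := by
    rw [cyclicSpan, Submodule.span_le]
    rintro _ ⟨k, rfl⟩
    simp only [SetLike.mem_coe, Submodule.mem_comap, Matrix.mulVecLin_apply]
    rw [Matrix.mulVec_mulVec, ← pow_succ']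
    exact Submodule.subset_span ⟨k + 1, rfl⟩
  have := hle hx
  simpa using this

variable {n : ℕ} (P : StackPartition n) (lam : Params P)

/-- Climbing within a block. -/
lemma key_q (v : Fin n → ℂ) (j : Fin P.t) (s : ℕ) (hs : s < P.m j)
    (h0 : ∀ r : Fin n, (r:ℕ) = P.idx (j:ℕ) 0 s →
      Pi.single r (1:ℂ) ∈ cyclicSpan (cpm P lam) v) :
    ∀ q, q < P.l j → ∀ r : Fin n, (r:ℕ) = P.idx (j:ℕ) q s →
      Pi.single r (1:ℂ) ∈ cyclicSpan (cpm P lam) v := by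
  intro q
  induction q with
  | zero => exact fun _ => h0
  | succ q ih =>
    intro hq r hr
    have hql : q < P.l j := by omega
    have hqE : q < P.lE (j:ℕ) := by rw [P.lE_coe]; exact hql
    have hsE : s < P.mE (j:ℕ) := by rw [P.mE_coe]; exact hs
    set r' : Fin n := ⟨P.idx (j:ℕ) q s, P.idx_lt_n j.isLt hqE hsE⟩ with hr'
    have hmem := ih hql r' rfl
    have hid := mulVec_single_sub P lam j hq hs r' r rfl hr
    rw [← hid]
    exact mulVec_mem_cyclicSpan _ _ hmem

/-- All standard basis vectors of class `i` lie in the cyclic span of `e_i`. -/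
lemma key : ∀ (j : ℕ), j < P.t → ∀ (s : ℕ), s < P.mE j → ∀ (i : Fin n),
    (i:ℕ) = s + (P.mE 0 - P.mE j) →
    ∀ q, q < P.lE j → ∀ r : Fin n, (r:ℕ) = P.idx j q s →
      Pi.single r (1:ℂ) ∈ cyclicSpan (cpm P lam) (Pi.single i (1:ℂ)) := by
  intro j
  induction j with
  | zero =>
    intro hj s hs i hi
    set jF : Fin P.t := ⟨0, hj⟩ with hjF
    have hsm : s < P.m jF := by rw [← P.mE_coe jF]; exact hs
    have hll : P.lE 0 = P.l jF := P.lE_coe jF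
    intro q hq r hrq
    refine key_q P lam (Pi.single i (1:ℂ)) jF s hsm ?_ q (by omega) r hrq
    intro r' hr'
    have hri : r' = i := by
      apply Fin.ext
      rw [hr', hi]
      show P.S 0 + 0 * P.mE 0 + s = _
      rw [P.S_zero]
      omega
    rw [hri]
    exact mem_cyclicSpan_self _ _
  | succ j ihj =>
    intro hj s hs i hi
    set jF : Fin P.t := ⟨j, by omega⟩ with hjF
    have hj1 : (jF:ℕ)+1 < P.t := hj
    have hmsle : P.mE (j+1) ≤ P.m jF := mE_succ_le P jF
    have hmpos : 0 < P.mE (j+1) := P.mE_pos hj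
    have hmposj := P.m_pos jF
    set sOld : ℕ := s + (P.m jF - P.mE (j+1)) with hsOld
    have hsOldm : sOld < P.m jF := by omega
    have hsOldE : sOld < P.mE j := by
      have : P.mE j = P.m jF := P.mE_coe jF
      omega
    have hiOld : (i:ℕ) = sOld + (P.mE 0 - P.mE j) := by
      have h1 : P.mE j ≤ P.mE 0 := P.mE_anti (Nat.zero_le _)
      have h2 : P.mE (j+1) ≤ P.mE j := P.mE_anti (Nat.le_succ _)
      have h3 : P.mE j = P.m jF := P.mE_coe jF
      omega
    have hIH := ihj (by omega) sOld hsOldE i hiOld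
    have hllj : P.lE j = P.l jF := P.lE_coe jF
    set w : Fin (P.l jF) → Fin n := fun q' => ⟨P.idx j (q':ℕ) sOld,
      P.idx_lt_n (by omega) (by omega) hsOldE⟩ with hwdef
    have hall : ∀ q' : Fin (P.l jF),
        Pi.single (w q') (1:ℂ) ∈ cyclicSpan (cpm P lam) (Pi.single i (1:ℂ)) :=
      fun q' => hIH (q':ℕ) (by omega) _ rfl
    have hlpos := P.l_pos jF
    set cLast : Fin n := ⟨P.idx j (P.l jF - 1) sOld,
      P.idx_lt_n (by omega) (by omega) hsOldE⟩ with hcLast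
    set jF1 : Fin P.t := ⟨j+1, hj⟩ with hjF1
    have hsm1 : s < P.m jF1 := by rw [← P.mE_coe jF1]; exact hs
    have hll1 : P.lE (j+1) = P.l jF1 := P.lE_coe jF1
    intro q hq r hrq
    refine key_q P lam (Pi.single i (1:ℂ)) jF1 s hsm1 ?_ q (by omega) r hrq
    intro r hr
    have hid := mulVec_single_last P lam jF hj1 (show s < P.mE ((jF:ℕ)+1) from hs)
      cLast r rfl hr w (fun q' => rfl)
    have hsum : (∑ q' : Fin (P.l jF),
        (-((∏ k, (X - C (lam jF k))).coeff (q':ℕ))) • Pi.single (w q') (1:ℂ))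
        ∈ cyclicSpan (cpm P lam) (Pi.single i (1:ℂ)) :=
      Submodule.sum_mem _ (fun q' _ => Submodule.smul_mem _ _ (hall q'))
    have hAe : cpm P lam *ᵥ Pi.single cLast (1:ℂ)
        ∈ cyclicSpan (cpm P lam) (Pi.single i (1:ℂ)) :=
      mulVec_mem_cyclicSpan _ _ (hIH _ (by omega) cLast rfl)
    have heq : Pi.single r (1:ℂ) = cpm P lam *ᵥ Pi.single cLast (1:ℂ)
        - (∑ q' : Fin (P.l jF),
            (-((∏ k, (X - C (lam jF k))).coeff (q':ℕ))) • Pi.single (w q') (1:ℂ)) := by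
      rw [hid]; abel
    rw [heq]
    exact Submodule.sub_mem _ hAe hsum

end CPM
end Aux4
section Aux5
namespace CPM
open StackPartition
variable {n : ℕ} (P : StackPartition n) (lam : Params P)

/-- Vectors supported on the indices of class `i`. -/
def suppMod (i : ℕ) : Submodule ℂ (Fin n → ℂ) where
  carrier := {x | ∀ r : Fin n, P.cls (r:ℕ) ≠ i → x r = 0}
  add_mem' := fun hx hy r hr => by
    rw [Pi.add_apply, hx r hr, hy r hr, add_zero]
  zero_mem' := fun r _ => rfl
  smul_mem' := fun c x hx r hr => by
    rw [Pi.smul_apply, hx r hr, smul_zero]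

lemma mem_suppMod {i : ℕ} {x : Fin n → ℂ} :
    x ∈ suppMod P i ↔ ∀ r : Fin n, P.cls (r:ℕ) ≠ i → x r = 0 := Iff.rfl

lemma single_mem_suppMod (r : Fin n) :
    Pi.single r (1:ℂ) ∈ suppMod P (P.cls (r:ℕ)) := by
  intro r' hr'
  rcases eq_or_ne r' r with h | h
  · exact absurd (h ▸ rfl) hr'
  · exact Pi.single_eq_of_ne h 1

lemma suppMod_eq_bot {i : ℕ} (hi : P.mE 0 ≤ i) : suppMod P i = ⊥ := by
  rw [eq_bot_iff]
  intro x hx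
  rw [Submodule.mem_bot]
  funext r
  have hrn : (r:ℕ) < n := r.isLt
  have := P.cls_lt_mE0 hrn
  exact hx r (by omega)

lemma mulVec_mem_suppMod {i : ℕ} {x : Fin n → ℂ} (hx : x ∈ suppMod P i) :
    cpm P lam *ᵥ x ∈ suppMod P i := by
  intro r hr
  show ∑ c, cpm P lam r c * x c = 0
  apply Finset.sum_eq_zero
  intro c _
  by_cases hc : P.cls (c:ℕ) = i
  · have hentry : cpmEntry P lam (r:ℕ) (c:ℕ) = 0 := by
      by_contra hne
      exact hr ((cls_preserve P lam r.isLt c.isLt hne).trans hc)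
    show cpmEntry P lam (r:ℕ) (c:ℕ) * x c = 0
    rw [hentry, zero_mul]
  · rw [hx c hc, mul_zero]

lemma pow_mulVec_single_mem (i : Fin n) (k : ℕ) :
    (cpm P lam) ^ k *ᵥ Pi.single i (1:ℂ) ∈ suppMod P (P.cls (i:ℕ)) := by
  induction k with
  | zero =>
    rw [pow_zero, Matrix.one_mulVec]
    exact single_mem_suppMod P i
  | succ k ih =>
    rw [pow_succ', ← Matrix.mulVec_mulVec]
    exact mulVec_mem_suppMod P lam ih

lemma cyclicSpan_le_suppMod (i : Fin n) :
    cyclicSpan (cpm P lam) (Pi.single i (1:ℂ)) ≤ suppMod P (P.cls (i:ℕ)) := by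
  rw [cyclicSpan, Submodule.span_le]
  rintro _ ⟨k, rfl⟩
  exact pow_mulVec_single_mem P lam i k

lemma suppMod_le_cyclicSpan (i : Fin n) (hi : (i:ℕ) < P.mE 0) :
    suppMod P (i:ℕ) ≤ cyclicSpan (cpm P lam) (Pi.single i (1:ℂ)) := by
  intro x hx
  rw [← Finset.univ_sum_single x]
  apply Submodule.sum_mem
  intro r _
  by_cases hc : P.cls (r:ℕ) = (i:ℕ)
  · have hsingle : Pi.single r (x r) = x r • (Pi.single r (1:ℂ) : Fin n → ℂ) := by
      funext r'
      rw [Pi.smul_apply, Pi.single_apply, Pi.single_apply]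
      split_ifs <;> simp
    rw [hsingle]
    apply Submodule.smul_mem
    -- decompose r
    have hrn : (r:ℕ) < n := r.isLt
    have hj := P.blk_lt hrn
    have hq := P.div_lt_lE hrn
    have hs := P.mod_lt_mE hrn
    have hidx := P.idx_decomp hrn
    have hcls : P.cls (r:ℕ)
        = (r - P.S (P.blk (r:ℕ))) % P.mE (P.blk (r:ℕ))
          + (P.mE 0 - P.mE (P.blk (r:ℕ))) := rfl
    exact key P lam (P.blk (r:ℕ)) hj _ hs i (by rw [← hc, hcls]) _ hq r hidx.symm
  · rw [show x r = 0 from hx r hc]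
    simp

/-- `cls i = i` for small `i`. -/
lemma cls_self {i : ℕ} (hi : i < P.mE 0) (hn0 : 0 < n) : P.cls i = i := by
  have ht := P.t_pos hn0
  have hi' : i = P.idx 0 0 i := by
    show i = P.S 0 + 0 * P.mE 0 + i
    rw [P.S_zero]
    omega
  conv_lhs => rw [hi']
  rw [P.cls_idx ht (P.lE_pos ht) hi]
  omega

/-- The class-support submodules decompose `ℂⁿ`. -/
lemma isInternal_suppMod (hn0 : 0 < n) :
    DirectSum.IsInternal (fun i : Fin n => suppMod P (i:ℕ)) := by
  apply DirectSum.isInternal_submodule_of_iSupIndep_of_iSup_eq_top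
  · rw [iSupIndep_def]
    intro i
    rw [Submodule.disjoint_def]
    intro x hxi hxrest
    -- the "complement" submodule
    set U : Submodule ℂ (Fin n → ℂ) :=
      { carrier := {y | ∀ r : Fin n, P.cls (r:ℕ) = (i:ℕ) → y r = 0}
        add_mem' := fun ha hb r hr => by rw [Pi.add_apply, ha r hr, hb r hr, add_zero]
        zero_mem' := fun r _ => rfl
        smul_mem' := fun c y hy r hr => by rw [Pi.smul_apply, hy r hr, smul_zero] } with hU
    have hrest : (⨆ j, ⨆ (_ : j ≠ i), suppMod P ((j : Fin n):ℕ)) ≤ U := by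
      apply iSup_le
      intro j
      apply iSup_le
      intro hji
      intro y hy r hr
      exact hy r (fun hc => hji (Fin.ext (hc.symm.trans hr)))
    have hxU : x ∈ U := hrest hxrest
    funext r
    by_cases hc : P.cls (r:ℕ) = (i:ℕ)
    · exact hxU r hc
    · exact hxi r hc
  · rw [eq_top_iff]
    rw [← (Pi.basisFun ℂ (Fin n)).span_eq, Submodule.span_le]
    rintro _ ⟨r, rfl⟩
    rw [Pi.basisFun_apply]
    have hcls : P.cls (r:ℕ) < n := lt_of_lt_of_le (P.cls_lt_mE0 r.isLt) (P.mE0_le_n hn0)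
    have hmem : Pi.single r (1:ℂ) ∈ suppMod P ((⟨P.cls (r:ℕ), hcls⟩ : Fin n):ℕ) :=
      single_mem_suppMod P r
    exact Submodule.mem_iSup_of_mem ⟨P.cls (r:ℕ), hcls⟩ hmem

end CPM
end Aux5
end MyAux

/-- For a canonical plane matrix `A ∈ 𝒫_π`, with
`V_i = ℂ[A]·e_i` for `i ∈ {1,...,m₁}` (here `0`-indexed: `(i : ℕ) < m₁`, and
the remaining members of the family are `⊥`), `ℂ^n` is the internal direct sum
`V_1 ⊕ ... ⊕ V_{m₁}`. -/
theorem statement2 (n : ℕ) (hn : 2 ≤ n) (P : StackPartition n) (lam : Params P)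
    (V : Fin n → Submodule ℂ (Fin n → ℂ))
    (hV : ∀ i : Fin n,
      V i = if (i : ℕ) < P.mE 0 then cyclicSpan (cpm P lam) (Pi.single i 1) else ⊥) :
    DirectSum.IsInternal V := by
  have hn0 : 0 < n := by omega
  have hVs : V = fun i : Fin n => CPM.suppMod P (i:ℕ) := by
    funext i
    rw [hV i]
    by_cases hi : (i:ℕ) < P.mE 0
    · rw [if_pos hi]
      apply le_antisymm
      · have h := CPM.cyclicSpan_le_suppMod P lam i
        rwa [CPM.cls_self P hi hn0] at h
      · exact CPM.suppMod_le_cyclicSpan P lam i hi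
    · rw [if_neg hi, CPM.suppMod_eq_bot P (by omega)]
  rw [hVs]
  exact CPM.isInternal_suppMod P hn0
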